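/- arXiv:2512.18860 — 3 statements merged into one kernel-verified Lean document; each statement's English description precedes it below -/
import Mathlib

section
/- Let T and C be independent nonnegative random variables, let ε be a random variable taking values in {1,2,3} that is measurable with respect to T (i.e., ε = f(T) for a measurable f), let G₋(u)=P(C≥u), and define the subdistribution function F_j(t)=P(T≤t, ε=j). Then P(T ≤ u, ε = j, C ≥ T) = ∫_{[0,u]} G₋ dF_j for every u ≥ 0. -/
open MeasureTheory ProbabilityTheory Set

/-! By independence the law of `(T, C)` is the product of the laws of `T` and `C`, so Tonelli
turns `P(T ∈ A, T ≤ C)` into `∫_A P(C ≥ t) dP_T(t)` with `A = (-∞, u] ∩ {f = j}`; restricting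
`P_T` to `{f = j}` is the same as pushing forward `P` restricted to `{ε = j}`, and since `T ≥ 0`
the interval `(-∞, u]` may be replaced by `[0, u]`. -/

theorem ProbabilityTheory.IndepFun.measure_prodMk_preimage_eq_lintegral
    {Ω α β : Type*} [MeasurableSpace Ω] [MeasurableSpace α] [MeasurableSpace β]
    {P : Measure Ω} [IsFiniteMeasure P] {X : Ω → α} {Y : Ω → β}
    (hX : Measurable X) (hY : Measurable Y) (hXY : IndepFun X Y P)
    {S : Set (α × β)} (hS : MeasurableSet S) :
    P ((fun ω ↦ (X ω, Y ω)) ⁻¹' S) = ∫⁻ x, P (Y ⁻¹' (Prod.mk x ⁻¹' S)) ∂(P.map X) := by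
  rw [← Measure.map_apply (hX.prodMk hY) hS, hXY.map_prod_eq_prod_map_map hX.aemeasurable
    hY.aemeasurable, Measure.prod_apply hS]
  exact lintegral_congr fun x ↦ Measure.map_apply hY (measurable_prodMk_left hS)

theorem ProbabilityTheory.IndepFun.measure_mem_and_le_eq_setLIntegral
    {Ω α : Type*} [MeasurableSpace Ω] [MeasurableSpace α] [TopologicalSpace α] [PartialOrder α]
    [OrderClosedTopology α] [SecondCountableTopology α] [OpensMeasurableSpace α]
    {P : Measure Ω} [IsFiniteMeasure P] {X Y : Ω → α}
    (hX : Measurable X) (hY : Measurable Y) (hXY : IndepFun X Y P)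
    {A : Set α} (hA : MeasurableSet A) :
    P {ω | X ω ∈ A ∧ X ω ≤ Y ω} = ∫⁻ x in A, P {ω | x ≤ Y ω} ∂(P.map X) := by
  have hS : MeasurableSet {p : α × α | p.1 ∈ A ∧ p.1 ≤ p.2} :=
    (measurable_fst hA).inter (measurableSet_le measurable_fst measurable_snd)
  refine (hXY.measure_prodMk_preimage_eq_lintegral hX hY hS).trans ?_
  rw [← lintegral_indicator hA]
  refine lintegral_congr fun x ↦ ?_
  by_cases hx : x ∈ A <;> simp [hx]

theorem Icc_ae_eq_Iic_of_ae_nonneg {μ : Measure ℝ} (hμ : ∀ᵐ x ∂μ, 0 ≤ x) (u : ℝ) :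
    Icc 0 u =ᵐ[μ] Iic u := by
  filter_upwards [hμ] with x hx
  change (x ∈ Icc 0 u) = (x ∈ Iic u)
  simp [hx]

theorem stmt1_general {Ω : Type*} [MeasurableSpace Ω] (P : Measure Ω) [IsProbabilityMeasure P]
    (T C : Ω → ℝ) (hT : Measurable T) (hC : Measurable C)
    (hTnn : ∀ ω, 0 ≤ T ω)
    (hind : IndepFun T C P)
    (f : ℝ → Fin 3) (hf : Measurable f) (j : Fin 3)
    (u : ℝ) :
    P {ω | T ω ≤ u ∧ f (T ω) = j ∧ T ω ≤ C ω}
      = ∫⁻ s in Set.Icc (0:ℝ) u, P {ω | s ≤ C ω}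
          ∂(Measure.map T (P.restrict {ω | f (T ω) = j})) := by
  have hB : MeasurableSet (f ⁻¹' {j}) := hf (measurableSet_singleton j)
  have hT_nonneg : ∀ᵐ s ∂(P.map T), 0 ≤ s :=
    (ae_map_iff hT.aemeasurable measurableSet_Ici).2 (ae_of_all _ hTnn)
  calc P {ω | T ω ≤ u ∧ f (T ω) = j ∧ T ω ≤ C ω}
      = P {ω | T ω ∈ Iic u ∩ f ⁻¹' {j} ∧ T ω ≤ C ω} := by
        congr 1; ext ω; simp [and_assoc]
    _ = ∫⁻ s in Iic u ∩ f ⁻¹' {j}, P {ω | s ≤ C ω} ∂(P.map T) :=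
      hind.measure_mem_and_le_eq_setLIntegral hT hC (measurableSet_Iic.inter hB)
    _ = ∫⁻ s in Icc 0 u ∩ f ⁻¹' {j}, P {ω | s ≤ C ω} ∂(P.map T) :=
      setLIntegral_congr ((Icc_ae_eq_Iic_of_ae_nonneg hT_nonneg u).symm.inter (by rfl))
    _ = _ := by
      rw [← Measure.restrict_restrict measurableSet_Icc, Measure.restrict_map hT hB]
      rfl

/-- Let `T`, `C` be independent nonnegative random variables, `ε = f(T)` a cause
indicator with values in `{1,2,3}` (modeled as `Fin 3`), and let
`F_j` be the subdistribution measure of cause `j`, i.e. the image under `T` of the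
restriction of `P` to `{ε = j}`.  Then
`P(T ≤ u, ε = j, C ≥ T) = ∫_{[0,u]} G₋(s) dF_j(s)` where `G₋(s) = P(C ≥ s)`. -/
theorem stmt1 {Ω : Type*} [MeasurableSpace Ω] (P : Measure Ω) [IsProbabilityMeasure P]
    (T C : Ω → ℝ) (hT : Measurable T) (hC : Measurable C)
    (hTnn : ∀ ω, 0 ≤ T ω) (hCnn : ∀ ω, 0 ≤ C ω)
    (hind : IndepFun T C P)
    (f : ℝ → Fin 3) (hf : Measurable f) (j : Fin 3)
    (u : ℝ) (hu : 0 ≤ u) :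
    P {ω | T ω ≤ u ∧ f (T ω) = j ∧ T ω ≤ C ω}
      = ∫⁻ s in Set.Icc (0:ℝ) u, P {ω | s ≤ C ω}
          ∂(Measure.map T (P.restrict {ω | f (T ω) = j})) :=
  stmt1_general P T C hT hC hTnn hind f hf j u
end

section
/- Let T, C be independent nonnegative random variables, ε = f(T) ∈ {1,2,3} for measurable f, Z = min(T,C), and define the observed subdistribution H_j(u) = P(Z ≤ u, T ≤ C, ε = j). Let S₋(u)=P(T≥u), G₋(u)=P(C≥u), F_j(t)=P(T≤t,ε=j), and A_j(t)=∫_{[0,t]} (1/S₋) dF_j. Then for every t with G₋(t)>0 (and hence P(Z≥u)>0 on [0,t]), A_j(t) = ∫_{[0,t]} (1/P(Z ≥ ·)) dH_j. -/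
open MeasureTheory ProbabilityTheory Set
open scoped ENNReal

/-! By independence, `P(Z ≥ s) = S₋(s) G₋(s)`, and the law of `T` restricted to
`{T ≤ C}` is `G₋ · dF` (Fubini over the product law of `(T, C)`), so `dH_j = G₋ dF_j`.
The factor `G₋` then cancels in `(S₋ G₋)⁻¹ dH_j = S₋⁻¹ dF_j` wherever `0 < G₋ < ∞`,
in particular on `[0, t]`. -/

section Censoring

variable {Ω : Type*} [MeasurableSpace Ω] {P : Measure Ω} {T C : Ω → ℝ}

theorem ProbabilityTheory.IndepFun.measure_le_min_eq_mul (hind : IndepFun T C P) (s : ℝ) :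
    P {ω | s ≤ min (T ω) (C ω)} = P {ω | s ≤ T ω} * P {ω | s ≤ C ω} := by
  have hmin : {ω | s ≤ min (T ω) (C ω)} = T ⁻¹' Ici s ∩ C ⁻¹' Ici s := by
    ext ω; simp
  rw [hmin, hind.measure_inter_preimage_eq_mul _ _ measurableSet_Ici measurableSet_Ici]
  rfl

theorem measurable_measure_le (P : Measure Ω) (C : Ω → ℝ) :
    Measurable fun s : ℝ => P {ω | s ≤ C ω} :=
  Antitone.measurable fun _ _ hab => measure_mono fun _ h => hab.trans h

theorem map_restrict_le_eq_withDensity [IsFiniteMeasure P] (hT : Measurable T)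
    (hC : Measurable C) (hind : IndepFun T C P) :
    (P.restrict {ω | T ω ≤ C ω}).map T = (P.map T).withDensity fun s => P {ω | s ≤ C ω} := by
  ext B hB
  have hE : MeasurableSet {p : ℝ × ℝ | p.1 ∈ B ∧ p.1 ≤ p.2} :=
    (measurable_fst hB).inter (measurableSet_le measurable_fst measurable_snd)
  calc (P.restrict {ω | T ω ≤ C ω}).map T B
      = P.map (fun ω => (T ω, C ω)) {p | p.1 ∈ B ∧ p.1 ≤ p.2} := by
        rw [Measure.map_apply hT hB, Measure.restrict_apply (hT hB),
          Measure.map_apply (hT.prodMk hC) hE]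
        rfl
    _ = ((P.map T).prod (P.map C)) {p | p.1 ∈ B ∧ p.1 ≤ p.2} := by
        rw [(indepFun_iff_map_prod_eq_prod_map_map hT.aemeasurable hC.aemeasurable).mp hind]
    _ = ∫⁻ x in B, P {ω | x ≤ C ω} ∂P.map T := by
        rw [Measure.prod_apply hE, ← lintegral_indicator hB]
        refine lintegral_congr fun x => ?_
        by_cases hx : x ∈ B
        · have hsection : Prod.mk x ⁻¹' {p : ℝ × ℝ | p.1 ∈ B ∧ p.1 ≤ p.2} = Ici x := by
            ext; simp [hx]
          rw [hsection, indicator_of_mem hx, Measure.map_apply hC measurableSet_Ici]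
          rfl
        · have hsection : Prod.mk x ⁻¹' {p : ℝ × ℝ | p.1 ∈ B ∧ p.1 ≤ p.2} = ∅ := by
            ext; simp [hx]
          rw [hsection, indicator_of_notMem hx, measure_empty]
    _ = (P.map T).withDensity (fun s => P {ω | s ≤ C ω}) B := (withDensity_apply _ hB).symm

theorem map_min_restrict_le_inter_preimage [IsFiniteMeasure P] (hT : Measurable T)
    (hC : Measurable C) (hind : IndepFun T C P) {A : Set ℝ} (hA : MeasurableSet A) :
    (P.restrict ({ω | T ω ≤ C ω} ∩ T ⁻¹' A)).map (fun ω => min (T ω) (C ω)) =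
      ((P.map T).restrict A).withDensity fun s => P {ω | s ≤ C ω} := by
  have hmin : (fun ω => min (T ω) (C ω)) =ᵐ[P.restrict ({ω | T ω ≤ C ω} ∩ T ⁻¹' A)] T :=
    (ae_restrict_iff' ((measurableSet_le hT hC).inter (hT hA))).mpr
      (Filter.Eventually.of_forall fun _ h => min_eq_left h.1)
  rw [Measure.map_congr hmin, inter_comm, ← Measure.restrict_restrict (hT hA),
    ← Measure.restrict_map hT hA, map_restrict_le_eq_withDensity hT hC hind,
    restrict_withDensity hA]

theorem setLIntegral_inv_mul_withDensity {α : Type*} [MeasurableSpace α] (μ : Measure α)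
    (S : α → ℝ≥0∞) {G : α → ℝ≥0∞} (hG : Measurable G) {s : Set α} (hs : MeasurableSet s)
    (hG0 : ∀ x ∈ s, G x ≠ 0) (hGtop : ∀ x ∈ s, G x ≠ ∞) :
    ∫⁻ x in s, (S x * G x)⁻¹ ∂μ.withDensity G = ∫⁻ x in s, (S x)⁻¹ ∂μ := by
  rw [restrict_withDensity hs, lintegral_withDensity_eq_lintegral_mul_non_measurable _ hG
    ((ae_restrict_iff' hs).mpr (Filter.Eventually.of_forall fun x hx => (hGtop x hx).lt_top))]
  refine setLIntegral_congr_fun hs fun x hx => ?_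
  rw [Pi.mul_apply, ENNReal.mul_inv (Or.inr (hGtop x hx)) (Or.inr (hG0 x hx)), mul_comm,
    mul_assoc, ENNReal.inv_mul_cancel (hG0 x hx) (hGtop x hx), mul_one]

end Censoring

theorem stmt2_general {Ω : Type*} [MeasurableSpace Ω] (P : Measure Ω) [IsProbabilityMeasure P]
    (T C : Ω → ℝ) (hT : Measurable T) (hC : Measurable C)
    (hind : IndepFun T C P)
    (f : ℝ → Fin 3) (hf : Measurable f) (j : Fin 3)
    (t : ℝ) (hGpos : 0 < P {ω | t ≤ C ω}) :
    ∫⁻ s in Set.Icc (0:ℝ) t, (P {ω | s ≤ T ω})⁻¹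
        ∂(Measure.map T (P.restrict {ω | f (T ω) = j}))
      = ∫⁻ s in Set.Icc (0:ℝ) t, (P {ω | s ≤ min (T ω) (C ω)})⁻¹
          ∂(Measure.map (fun ω => min (T ω) (C ω))
              (P.restrict {ω | T ω ≤ C ω ∧ f (T ω) = j})) := by
  have hA : MeasurableSet (f ⁻¹' {j}) := hf (measurableSet_singleton j)
  have hG0 : ∀ s ∈ Icc (0:ℝ) t, P {ω | s ≤ C ω} ≠ 0 := fun s hs =>
    (hGpos.trans_le (measure_mono fun _ h => hs.2.trans h)).ne'
  have hcause : {ω | f (T ω) = j} = T ⁻¹' (f ⁻¹' {j}) := rfl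
  have huncensored : {ω | T ω ≤ C ω ∧ f (T ω) = j} = {ω | T ω ≤ C ω} ∩ T ⁻¹' (f ⁻¹' {j}) := rfl
  simp_rw [hind.measure_le_min_eq_mul]
  rw [huncensored, hcause, map_min_restrict_le_inter_preimage hT hC hind hA,
    ← Measure.restrict_map hT hA,
    setLIntegral_inv_mul_withDensity _ _ (measurable_measure_le P C) measurableSet_Icc hG0
      fun _ _ => measure_ne_top P _]

/-- Competing risks with right-censoring: `T` event time with cause `ε = f(T) ∈ {1,2,3}`,
`C` an independent censoring time, `Z = min(T,C)`.  The cause-specific cumulative hazard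
`A_j(t) = ∫_{[0,t]} (1/S₋) dF_j` (where `S₋(s) = P(T ≥ s)` and `F_j` is the image under `T`
of `P` restricted to `{ε = j}`) is identifiable from the censored data: for every `t` with
`G₋(t) = P(C ≥ t) > 0`,
`A_j(t) = ∫_{[0,t]} (1 / P(Z ≥ ·)) dH_j`, where `H_j` is the image under `Z` of `P`
restricted to `{T ≤ C, ε = j}`. -/
theorem stmt2 {Ω : Type*} [MeasurableSpace Ω] (P : Measure Ω) [IsProbabilityMeasure P]
    (T C : Ω → ℝ) (hT : Measurable T) (hC : Measurable C)
    (hTnn : ∀ ω, 0 ≤ T ω) (hCnn : ∀ ω, 0 ≤ C ω)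
    (hind : IndepFun T C P)
    (f : ℝ → Fin 3) (hf : Measurable f) (j : Fin 3)
    (t : ℝ) (ht : 0 ≤ t) (hGpos : 0 < P {ω | t ≤ C ω}) :
    ∫⁻ s in Set.Icc (0:ℝ) t, (P {ω | s ≤ T ω})⁻¹
        ∂(Measure.map T (P.restrict {ω | f (T ω) = j}))
      = ∫⁻ s in Set.Icc (0:ℝ) t, (P {ω | s ≤ min (T ω) (C ω)})⁻¹
          ∂(Measure.map (fun ω => min (T ω) (C ω))
              (P.restrict {ω | T ω ≤ C ω ∧ f (T ω) = j})) :=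
  stmt2_general P T C hT hC hind f hf j t hGpos
end

section
/- Let T₁, T₂, C₂ be random variables with T₂ and C₂ independent, T₁ positive. Define the transformed survival time R = T₂/T₁ and transformed censoring time D = C₂/T₁. If T₁ is non-degenerate and both T₂ and C₂ are a.s. positive and independent of each other but C₂ is independent of (T₁,T₂), then R and D need not be independent; concretely, if T₁ takes values 1 and 2 each with probability 1/2, and T₂, C₂ are independent of T₁ and of each other with continuous positive distributions, then there exist r, d > 0 such that P(R > r, D > d) ≠ P(R > r)·P(D > d). -/
/-!
Write `F x = P(T₂ > x)` and `G x = P(C₂ > x)`. Conditioning on `T₁ ∈ {1, 2}` gives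
`P(R > r, D > d) = (F r * G d + F (2r) * G (2d)) / 2`, while `P(R > r) * P(D > d)` is the product
of the averages `(F r + F (2r)) / 2` and `(G d + G (2d)) / 2`; the difference is
`(F r - F (2r)) * (G d - G (2d)) / 4`. It is positive as soon as both survival functions drop
strictly between `r` and `2r` (resp. `d` and `2d`), and such points exist: a survival function
invariant under doubling would be constant along `2 ^ n`, `n ∈ ℤ`, hence equal to both of its
limits `P(T₂ > 0) = 1` and `0`.
-/

open MeasureTheory ProbabilityTheory Set
open scoped ENNReal NNReal

theorem iInter_Ioi_zpow {c : ℝ} (hc : 1 < c) : ⋂ n : ℤ, Ioi (c ^ n) = ∅ := by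
  refine eq_empty_of_forall_notMem fun x hx ↦ ?_
  obtain ⟨n, hn⟩ := pow_unbounded_of_one_lt x hc
  exact (mem_iInter.1 hx n).not_gt (by simpa using hn)

theorem iUnion_Ioi_zpow {c : ℝ} (hc : 1 < c) : ⋃ n : ℤ, Ioi (c ^ n) = Ioi 0 := by
  refine Subset.antisymm (iUnion_subset fun n ↦ Ioi_subset_Ioi (by positivity)) fun x hx ↦ ?_
  obtain ⟨n, hn, -⟩ := exists_mem_Ioc_zpow hx hc
  exact mem_iUnion.2 ⟨n, hn⟩

theorem exists_measure_Ioi_mul_lt {μ : Measure ℝ} [IsFiniteMeasure μ] {c : ℝ} (hc : 1 < c)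
    (h0 : μ (Ioi 0) ≠ 0) : ∃ r > 0, μ (Ioi (r * c)) < μ (Ioi r) := by
  by_contra! hle
  have hscale : ∀ r > 0, μ (Ioi (r * c)) = μ (Ioi r) := fun r hr ↦
    le_antisymm (measure_mono (Ioi_subset_Ioi (le_mul_of_one_le_right hr.le hc.le))) (hle r hr)
  have hc0 : c ≠ 0 := by positivity
  have hzpow : ∀ n : ℤ, μ (Ioi (c ^ n)) = μ (Ioi 1) := by
    intro n
    induction n using Int.induction_on with
    | zero => simp
    | succ n ih => rw [zpow_add_one₀ hc0, hscale _ (by positivity), ih]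
    | pred n ih => rw [← ih, ← hscale _ (by positivity), ← zpow_add_one₀ hc0, sub_add_cancel]
  have hanti : Antitone fun n : ℤ ↦ Ioi (c ^ n) := fun m n hmn ↦
    Ioi_subset_Ioi (zpow_le_zpow_right₀ hc.le hmn)
  have htop := tendsto_measure_iInter_atTop (μ := μ)
    (fun _ ↦ measurableSet_Ioi.nullMeasurableSet) hanti ⟨0, measure_ne_top _ _⟩
  have hbot := tendsto_measure_iUnion_atBot (μ := μ) hanti
  simp only [Function.comp_def, hzpow, iInter_Ioi_zpow hc, iUnion_Ioi_zpow hc,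
    measure_empty] at htop hbot
  refine h0 ?_
  calc μ (Ioi 0) = μ (Ioi 1) := tendsto_nhds_unique hbot tendsto_const_nhds
    _ = 0 := tendsto_nhds_unique tendsto_const_nhds htop

theorem ENNReal.convex_comb_mul_convex_comb_lt {p q a b c e : ℝ≥0∞} (hpq : p + q = 1) (hp : p ≠ 0)
    (hq : q ≠ 0) (ha : a ≠ ∞) (hc : c ≠ ∞) (hba : b < a) (hec : e < c) :
    (p * a + q * b) * (p * c + q * e) < p * (a * c) + q * (b * e) := by
  lift p to ℝ≥0 using ne_top_of_le_ne_top one_ne_top (hpq ▸ le_self_add)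
  lift q to ℝ≥0 using ne_top_of_le_ne_top one_ne_top (hpq ▸ le_add_self)
  lift a to ℝ≥0 using ha
  lift c to ℝ≥0 using hc
  lift b to ℝ≥0 using hba.ne_top
  lift e to ℝ≥0 using hec.ne_top
  norm_cast at *
  rw [← NNReal.coe_lt_coe] at hba hec ⊢
  have hpq' : (p : ℝ) + q = 1 := by exact_mod_cast hpq
  have hq' : (q : ℝ) = 1 - p := by linear_combination hpq'
  have hp0 : (0 : ℝ) < p := by positivity
  have hq0 : (0 : ℝ) < q := by positivity
  push_cast
  have hcov : (p * (a * c) + q * (b * e) - (p * a + q * b) * (p * c + q * e) : ℝ)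
      = p * q * ((a - b) * (c - e)) := by rw [hq']; ring
  linarith [_root_.mul_pos (_root_.mul_pos hp0 hq0)
    (_root_.mul_pos (sub_pos.2 hba) (sub_pos.2 hec))]

theorem preimage_div_const_Ioi₀ {a c : ℝ} (hc : 0 < c) : (· / c) ⁻¹' Ioi a = Ioi (a * c) := by
  ext x
  simp [lt_div_iff₀ hc]

section

variable {Ω : Type*} [MeasurableSpace Ω] {P : Measure Ω}

theorem measure_eq_inter_add_inter_of_add_eq_one [IsProbabilityMeasure P] {A B : Set Ω}
    (hA : MeasurableSet A) (hB : MeasurableSet B) (hAB : Disjoint A B) (h : P A + P B = 1)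
    (S : Set Ω) : P S = P (S ∩ A) + P (S ∩ B) := by
  have hnull : P (A ∪ B)ᶜ = 0 := by
    rw [prob_compl_eq_zero_iff (hA.union hB), measure_union hAB hB, h]
  have hdiff : S \ A ∩ (A ∪ B) = S ∩ B := by
    ext ω
    have := hAB.notMem_of_mem_right (a := ω)
    simp only [mem_inter_iff, Set.mem_sdiff, mem_union]
    tauto
  rw [← measure_inter_add_sdiff S hA, ← measure_inter_conull hnull (s := S \ A), hdiff]

theorem ProbabilityTheory.iIndepFun.measure_preimage_inter_preimage_inter_preimage {β : Type*}
    [MeasurableSpace β] {f g h : Ω → β} (hfgh : iIndepFun ![f, g, h] P) {s t u : Set β}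
    (hs : MeasurableSet s) (ht : MeasurableSet t) (hu : MeasurableSet u) :
    P (f ⁻¹' s ∩ g ⁻¹' t ∩ h ⁻¹' u) = P (f ⁻¹' s) * P (g ⁻¹' t) * P (h ⁻¹' u) := by
  have key := hfgh.measure_inter_preimage_eq_mul Finset.univ (sets := ![s, t, u])
    (fun i _ ↦ by fin_cases i <;> assumption)
  have hset : ⋂ i ∈ Finset.univ, ![f, g, h] i ⁻¹' ![s, t, u] i
      = f ⁻¹' s ∩ g ⁻¹' t ∩ h ⁻¹' u := by
    ext ω
    simp [Fin.forall_fin_succ, and_assoc]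
  rw [hset, Fin.prod_univ_three] at key
  simpa using key

variable {T X Y : Ω → ℝ}

theorem measure_div_mem_inter_preimage_singleton (hTXY : iIndepFun ![T, X, Y] P) (a : ℝ)
    {s t : Set ℝ} (hs : MeasurableSet s) (ht : MeasurableSet t) :
    P ({ω | X ω / T ω ∈ s ∧ Y ω / T ω ∈ t} ∩ T ⁻¹' {a})
      = P (T ⁻¹' {a}) * (P (X ⁻¹' ((· / a) ⁻¹' s)) * P (Y ⁻¹' ((· / a) ⁻¹' t))) := by
  have hset : {ω | X ω / T ω ∈ s ∧ Y ω / T ω ∈ t} ∩ T ⁻¹' {a}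
      = T ⁻¹' {a} ∩ X ⁻¹' ((· / a) ⁻¹' s) ∩ Y ⁻¹' ((· / a) ⁻¹' t) := by
    ext ω
    by_cases hω : T ω = a <;> simp [hω]
  rw [hset, hTXY.measure_preimage_inter_preimage_inter_preimage (measurableSet_singleton a)
    (measurable_div_const a hs) (measurable_div_const a ht), mul_assoc]

theorem measure_div_mem_and_div_mem [IsProbabilityMeasure P] (hT : Measurable T)
    (hTXY : iIndepFun ![T, X, Y] P) (h1 : P {ω | T ω = 1} = 1 / 2)
    (h2 : P {ω | T ω = 2} = 1 / 2) {s t : Set ℝ} (hs : MeasurableSet s) (ht : MeasurableSet t) :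
    P {ω | X ω / T ω ∈ s ∧ Y ω / T ω ∈ t}
      = 2⁻¹ * (P (X ⁻¹' s) * P (Y ⁻¹' t))
        + 2⁻¹ * (P (X ⁻¹' ((· / 2) ⁻¹' s)) * P (Y ⁻¹' ((· / 2) ⁻¹' t))) := by
  rw [measure_eq_inter_add_inter_of_add_eq_one (P := P) (hT (measurableSet_singleton 1))
    (hT (measurableSet_singleton 2))
    ((disjoint_singleton.2 (by norm_num : (1 : ℝ) ≠ 2)).preimage T)
    (by simp [preimage, h1, h2, ENNReal.inv_two_add_inv_two]),
    measure_div_mem_inter_preimage_singleton hTXY 1 hs ht,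
    measure_div_mem_inter_preimage_singleton hTXY 2 hs ht]
  simp [preimage, h1, h2]

end

theorem stmt13_general {Ω : Type*} [MeasurableSpace Ω] (P : Measure Ω) [IsProbabilityMeasure P]
    (T₁ T₂ C₂ : Ω → ℝ)
    (hT₁ : Measurable T₁) (hT₂ : Measurable T₂) (hC₂ : Measurable C₂)
    (hindep : iIndepFun ![T₁, T₂, C₂] P)
    (hT₁1 : P {ω | T₁ ω = 1} = 1 / 2) (hT₁2 : P {ω | T₁ ω = 2} = 1 / 2)
    (hT₂pos : P {ω | 0 < T₂ ω} = 1) (hC₂pos : P {ω | 0 < C₂ ω} = 1) :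
    ∃ r > (0:ℝ), ∃ d > (0:ℝ),
      P {ω | r < T₂ ω / T₁ ω ∧ d < C₂ ω / T₁ ω}
        ≠ P {ω | r < T₂ ω / T₁ ω} * P {ω | d < C₂ ω / T₁ ω} := by
  have hgap : ∀ Z : Ω → ℝ, Measurable Z → P {ω | 0 < Z ω} = 1 →
      ∃ r > 0, P (Z ⁻¹' Ioi (r * 2)) < P (Z ⁻¹' Ioi r) := fun Z hZ hpos ↦ by
    simpa only [Measure.map_apply hZ measurableSet_Ioi] using
      exists_measure_Ioi_mul_lt (μ := P.map Z) one_lt_two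
        (by rw [Measure.map_apply hZ measurableSet_Ioi]; exact hpos ▸ one_ne_zero)
  obtain ⟨r, hr, hgapT⟩ := hgap T₂ hT₂ hT₂pos
  obtain ⟨d, hd, hgapC⟩ := hgap C₂ hC₂ hC₂pos
  have hcond {s t : Set ℝ} := measure_div_mem_and_div_mem (s := s) (t := t) hT₁ hindep hT₁1 hT₁2
  have hJ := hcond (measurableSet_Ioi (a := r)) (measurableSet_Ioi (a := d))
  have hR := hcond (measurableSet_Ioi (a := r)) MeasurableSet.univ
  have hD := hcond MeasurableSet.univ (measurableSet_Ioi (a := d))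
  simp only [mem_Ioi, mem_univ, and_true, true_and, preimage_univ, measure_univ, mul_one, one_mul,
    preimage_div_const_Ioi₀ two_pos] at hJ hR hD
  refine ⟨r, hr, d, hd, ?_⟩
  rw [hJ, hR, hD]
  exact (ENNReal.convex_comb_mul_convex_comb_lt ENNReal.inv_two_add_inv_two (by simp) (by simp)
    (measure_ne_top _ _) (measure_ne_top _ _) hgapT hgapC).ne'

/-- Failure of independent censoring for the PFS-ratio transformation: if `T₁` takes the
values `1` and `2` with probability `1/2` each, and `T₂`, `C₂` are mutually independent
of `T₁` and of each other with continuous (atomless) positive distributions, then the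
transformed survival time `R = T₂/T₁` and the transformed censoring time `D = C₂/T₁` are
not independent: there are `r, d > 0` with `P(R > r, D > d) ≠ P(R > r)·P(D > d)`. -/
theorem stmt13 {Ω : Type*} [MeasurableSpace Ω] (P : Measure Ω) [IsProbabilityMeasure P]
    (T₁ T₂ C₂ : Ω → ℝ)
    (hT₁ : Measurable T₁) (hT₂ : Measurable T₂) (hC₂ : Measurable C₂)
    (hindep : iIndepFun ![T₁, T₂, C₂] P)
    (hT₁1 : P {ω | T₁ ω = 1} = 1 / 2) (hT₁2 : P {ω | T₁ ω = 2} = 1 / 2)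
    (hT₂pos : P {ω | 0 < T₂ ω} = 1) (hC₂pos : P {ω | 0 < C₂ ω} = 1)
    (hT₂cont : ∀ x : ℝ, P {ω | T₂ ω = x} = 0)
    (hC₂cont : ∀ x : ℝ, P {ω | C₂ ω = x} = 0) :
    ∃ r > (0:ℝ), ∃ d > (0:ℝ),
      P {ω | r < T₂ ω / T₁ ω ∧ d < C₂ ω / T₁ ω}
        ≠ P {ω | r < T₂ ω / T₁ ω} * P {ω | d < C₂ ω / T₁ ω} :=
  stmt13_general P T₁ T₂ C₂ hT₁ hT₂ hC₂ hindep hT₁1 hT₁2 hT₂pos hC₂pos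
end
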